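/- Consider the binary univariate Gaussian mixture setup with q_{ia} > 0, σ_{ia} > 0, and suppose (μ_{01} − μ_{11})/σ_{11} = (μ_{00} − μ_{10})/σ_{10}, σ_{11}/σ_{01} = σ_{10}/σ_{00}, and q_{10}/q_{00} = q_{11}/q_{01}. Then for every threshold t ∈ (0,1), the threshold classifier h_t(x,a) = 1{η(x,a) ≥ t} satisfies exact demographic parity: Σ_{i∈{0,1}} (q_{i0}/(q_{00}+q_{10})) · P_{X ~ N(μ_{i0}, σ_{i0}²)}(η(X,0) ≥ t) = Σ_{i∈{0,1}} (q_{i1}/(q_{01}+q_{11})) · P_{X ~ N(μ_{i1}, σ_{i1}²)}(η(X,1) ≥ t). -/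

import Mathlib

/-!
The ideality conditions say exactly that the single affine map `T x = b + c x`, with
`c = σ₀₁ / σ₀₀ = σ₁₁ / σ₁₀ > 0`, pushes `N(μᵢ₀, σᵢ₀²)` forward to `N(μᵢ₁, σᵢ₁²)` for both classes
`i`. Since `T` divides both class densities by the same factor `c` and the class odds
`q₁ₐ / q₀ₐ` agree across groups, `η (T x) 1 = η x 0`. Hence `T` carries the acceptance region
of group 0 onto that of group 1, every class-conditional positive rate agrees, and so do the
mixture weights.
-/

open MeasureTheory ProbabilityTheory

/-- Density of the univariate normal distribution `N(m, s²)`. -/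
noncomputable def gaussPdf (m s x : ℝ) : ℝ :=
  (Real.sqrt (2 * Real.pi * s ^ 2))⁻¹ * Real.exp (-(x - m) ^ 2 / (2 * s ^ 2))

/-- The group-aware posterior `η(x, a) = q_{1a} φ_{1a}(x) / (q_{1a} φ_{1a}(x) + q_{0a} φ_{0a}(x))`. -/
noncomputable def posterior (q m s : Fin 2 → Fin 2 → ℝ) (x : ℝ) (a : Fin 2) : ℝ :=
  q 1 a * gaussPdf (m 1 a) (s 1 a) x /
    (q 1 a * gaussPdf (m 1 a) (s 1 a) x + q 0 a * gaussPdf (m 0 a) (s 0 a) x)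

lemma gaussPdf_pos (m : ℝ) {s : ℝ} (hs : 0 < s) (x : ℝ) : 0 < gaussPdf m s x := by
  unfold gaussPdf
  positivity

lemma gaussPdf_affine (b m s x : ℝ) {c : ℝ} (hc : 0 < c) :
    gaussPdf (b + c * m) (c * s) (b + c * x) = gaussPdf m s x / c := by
  unfold gaussPdf
  rw [show 2 * Real.pi * (c * s) ^ 2 = c ^ 2 * (2 * Real.pi * s ^ 2) by ring,
    Real.sqrt_mul (sq_nonneg c), Real.sqrt_sq hc.le,
    show -(b + c * x - (b + c * m)) ^ 2 / (2 * (c * s) ^ 2) = -(x - m) ^ 2 / (2 * s ^ 2) by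
      field_simp; ring]
  field_simp

lemma measurable_posterior (q m s : Fin 2 → Fin 2 → ℝ) (a : Fin 2) :
    Measurable fun x => posterior q m s x a := by
  unfold _root_.posterior gaussPdf
  fun_prop

lemma gaussianReal_map_affine (b c m s : ℝ) :
    (gaussianReal m (s ^ 2).toNNReal).map (fun x => b + c * x) =
      gaussianReal (b + c * m) ((c * s) ^ 2).toNNReal := by
  rw [show (fun x : ℝ => b + c * x) = (b + ·) ∘ (c * ·) from rfl,
    ← Measure.map_map (by fun_prop) (by fun_prop), gaussianReal_map_const_mul,
    gaussianReal_map_const_add, add_comm]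
  congr
  ext
  simp [mul_pow, Real.coe_toNNReal _ (sq_nonneg s),
    Real.coe_toNNReal _ (by positivity : 0 ≤ c ^ 2 * s ^ 2)]

section Mixture

variable {q m s : Fin 2 → Fin 2 → ℝ}

lemma exists_affine_of_ideality (hs : ∀ i a, 0 < s i a)
    (hcond1 : (m 0 1 - m 1 1) / s 1 1 = (m 0 0 - m 1 0) / s 1 0)
    (hcond2 : s 1 1 / s 0 1 = s 1 0 / s 0 0) :
    ∃ b c : ℝ, 0 < c ∧ (∀ i, m i 1 = b + c * m i 0) ∧ ∀ i, s i 1 = c * s i 0 := by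
  have h00 := (hs 0 0).ne'; have h01 := (hs 0 1).ne'
  have h10 := (hs 1 0).ne'; have h11 := (hs 1 1).ne'
  rw [div_eq_div_iff h11 h10] at hcond1
  rw [div_eq_div_iff h01 h00] at hcond2
  refine ⟨m 0 1 - s 0 1 / s 0 0 * m 0 0, s 0 1 / s 0 0, div_pos (hs 0 1) (hs 0 0),
    Fin.forall_fin_two.2 ⟨by ring, ?_⟩, Fin.forall_fin_two.2 ⟨by field_simp, ?_⟩⟩
  · field_simp
    apply mul_left_cancel₀ h10
    linear_combination (-s 0 0) * hcond1 - (m 0 0 - m 1 0) * hcond2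
  · field_simp
    linear_combination hcond2

lemma mixture_weight_eq (hq : ∀ i a, 0 < q i a) (hcond3 : q 1 0 / q 0 0 = q 1 1 / q 0 1)
    (i : Fin 2) : q i 0 / (q 0 0 + q 1 0) = q i 1 / (q 0 1 + q 1 1) := by
  have h0 := add_pos (hq 0 0) (hq 1 0); have h1 := add_pos (hq 0 1) (hq 1 1)
  rw [div_eq_div_iff (hq 0 0).ne' (hq 0 1).ne'] at hcond3
  rw [div_eq_div_iff h0.ne' h1.ne']
  revert i
  rw [Fin.forall_fin_two]
  exact ⟨by linear_combination -hcond3, by linear_combination hcond3⟩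

lemma posterior_affine (hq : ∀ i a, 0 < q i a) (hs : ∀ i, 0 < s i 0)
    (hcond3 : q 1 0 / q 0 0 = q 1 1 / q 0 1) {b c : ℝ} (hc : 0 < c)
    (hm : ∀ i, m i 1 = b + c * m i 0) (hsc : ∀ i, s i 1 = c * s i 0) (x : ℝ) :
    posterior q m s (b + c * x) 1 = posterior q m s x 0 := by
  have hφ0 := gaussPdf_pos (m 0 0) (hs 0) x
  have hφ1 := gaussPdf_pos (m 1 0) (hs 1) x
  have hq00 := hq 0 0; have hq10 := hq 1 0; have hq01 := hq 0 1; have hq11 := hq 1 1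
  rw [div_eq_div_iff hq00.ne' hq01.ne'] at hcond3
  unfold _root_.posterior
  simp only [hm, hsc, gaussPdf_affine _ _ _ _ hc]
  field_simp
  linear_combination -gaussPdf (m 0 0) (s 0 0) x * hcond3

end Mixture

theorem statement3_general (q m s : Fin 2 → Fin 2 → ℝ)
    (hq : ∀ i a, 0 < q i a)
    (hs : ∀ i a, 0 < s i a)
    (hcond1 : (m 0 1 - m 1 1) / s 1 1 = (m 0 0 - m 1 0) / s 1 0)
    (hcond2 : s 1 1 / s 0 1 = s 1 0 / s 0 0)
    (hcond3 : q 1 0 / q 0 0 = q 1 1 / q 0 1) :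
    ∀ t ∈ Set.Ioo (0 : ℝ) 1,
      (∑ i : Fin 2, q i 0 / (q 0 0 + q 1 0) *
        (gaussianReal (m i 0) ((s i 0 ^ 2).toNNReal)
          {x | posterior q m s x 0 ≥ t}).toReal) =
      (∑ i : Fin 2, q i 1 / (q 0 1 + q 1 1) *
        (gaussianReal (m i 1) ((s i 1 ^ 2).toNNReal)
          {x | posterior q m s x 1 ≥ t}).toReal) := by
  intro t _
  obtain ⟨b, c, hc, hm, hsc⟩ := exists_affine_of_ideality hs hcond1 hcond2
  have hmeas : MeasurableSet {x | posterior q m s x 1 ≥ t} :=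
    measurableSet_le measurable_const (measurable_posterior q m s 1)
  have hrate (i : Fin 2) : gaussianReal (m i 1) ((s i 1 ^ 2).toNNReal)
      {x | posterior q m s x 1 ≥ t} = gaussianReal (m i 0) ((s i 0 ^ 2).toNNReal)
      {x | posterior q m s x 0 ≥ t} := by
    rw [hm i, hsc i, ← gaussianReal_map_affine, Measure.map_apply (by fun_prop) hmeas]
    congr 1
    ext x
    simp only [Set.mem_preimage, Set.mem_ofPred_eq,
      posterior_affine hq (fun i => hs i 0) hcond3 hc hm hsc]
  refine Finset.sum_congr rfl fun i _ => ?_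
  rw [mixture_weight_eq hq hcond3, hrate]

/-- in the binary univariate Gaussian mixture setup, the parametric
ideality conditions imply that every group-aware threshold classifier
`h_t(x,a) = 1{η(x,a) ≥ t}`, `t ∈ (0,1)`, satisfies exact demographic parity:
the positive rate on the group-conditional mixture distribution is equal for the
two groups. -/
theorem statement3 (q m s : Fin 2 → Fin 2 → ℝ)
    (hq : ∀ i a, 0 < q i a) (hqsum : ∑ i, ∑ a, q i a = 1)
    (hs : ∀ i a, 0 < s i a)
    (hcond1 : (m 0 1 - m 1 1) / s 1 1 = (m 0 0 - m 1 0) / s 1 0)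
    (hcond2 : s 1 1 / s 0 1 = s 1 0 / s 0 0)
    (hcond3 : q 1 0 / q 0 0 = q 1 1 / q 0 1) :
    ∀ t ∈ Set.Ioo (0 : ℝ) 1,
      (∑ i : Fin 2, q i 0 / (q 0 0 + q 1 0) *
        (gaussianReal (m i 0) ((s i 0 ^ 2).toNNReal)
          {x | posterior q m s x 0 ≥ t}).toReal) =
      (∑ i : Fin 2, q i 1 / (q 0 1 + q 1 1) *
        (gaussianReal (m i 1) ((s i 1 ^ 2).toNNReal)
          {x | posterior q m s x 1 ≥ t}).toReal) :=
  statement3_general q m s hq hs hcond1 hcond2 hcond3
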